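/- For all real x ∈ [0,1] and u ∈ (0,1), the series ∑_{p≥1} E_p(x)·u^p converges and equals (u²/(1−u)²)·((1−u)/(1−(1−x)u))^{1−1/u}, where E_p(x) := ∑_{n≥0} n·Q_{n,p}(x) and the power denotes the real power of the positive base (1−u)/(1−(1−x)u). -/

import Mathlib

open MeasureTheory intervalIntegral

/-- `Q n p x` : probability that a dart game with `p` remaining players, where the
probability of beating the best throw so far is `x`, ends after exactly `n` further throws. -/
noncomputable def Q : ℕ → ℕ → ℝ → ℝ
  | 0, p, _ => if p = 1 then 1 else 0
  | n + 1, p, x =>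
      if p ≤ 1 then 0
      else (1 - x) * Q n (p - 1) x + ∫ v in (0:ℝ)..x, Q n p v

/-!
Write `G n x = ∑ p, Q n p x * u ^ p`. The recursion for `Q` says `G (n + 1) = T (G n)` for
`n ≥ 1`, where `T f x = (1 - x) u f(x) + ∫₀ˣ f`, and `G 1 x = (1 - x) u²`. The constant
`ψ = u² / (1 - u)` and the closed form `χ` satisfy `T ψ = ψ - G 1` and `T χ = χ - ψ`, so Abel
summation gives `∑_{n ≤ M} n G n = χ - T^M χ - M T^M ψ`. On `[0, 1]` the operator `T` multiplies
the bound `|f y| ≤ C e^{a y}` by `u + 1/a < 1` when `a = 2 / (1 - u)`, so the remainders vanish and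
`∑ n G n = χ`. All terms `n Q n p x u^p` are nonnegative, so the double series can be summed
over `p` first.
-/

open Filter Topology Finset Set

theorem Module.End.sum_range_succ_nsmul_pow_apply {R V : Type*} [Semiring R] [AddCommGroup V]
    [Module R V] (T : Module.End R V) {g ψ χ : V} (hψ : T ψ = ψ - g) (hχ : T χ = χ - ψ)
    (M : ℕ) : ∑ n ∈ range M, (n + 1) • (T ^ n) g = χ - (T ^ M) χ - M • (T ^ M) ψ := by
  induction M with
  | zero => simp
  | succ M ih =>
    have hg : (T ^ M) g = (T ^ M) ψ - (T ^ (M + 1)) ψ := by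
      rw [pow_succ, Module.End.mul_apply, hψ, map_sub, sub_sub_cancel]
    have hψM : (T ^ M) ψ = (T ^ M) χ - (T ^ (M + 1)) χ := by
      rw [pow_succ, Module.End.mul_apply, hχ, map_sub, sub_sub_cancel]
    rw [sum_range_succ, ih, hg, hψM]
    module

theorem hasSum_tsum_swap_of_nonneg {β γ : Type*} {f : β → γ → ℝ} (hf : ∀ b c, 0 ≤ f b c)
    {g : β → ℝ} {s : ℝ} (hrow : ∀ b, HasSum (f b) (g b)) (hg : HasSum g s) :
    (∀ c, Summable fun b => f b c) ∧ HasSum (fun c => ∑' b, f b c) s := by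
  have hsum : Summable (Function.uncurry f) :=
    (summable_prod_of_nonneg fun q => hf q.1 q.2).2
      ⟨fun b => (hrow b).summable, hg.summable.congr fun b => ((hrow b).tsum_eq).symm⟩
  have hswap : HasSum (fun q : γ × β => f q.2 q.1) s := by
    have := hsum.hasSum
    rw [hsum.hasSum.prod_fiberwise hrow |>.unique hg] at this
    exact (Equiv.prodComm γ β).hasSum_iff.mpr this
  have hcol := ((summable_prod_of_nonneg fun q => hf q.2 q.1).1 hswap.summable).1
  exact ⟨hcol, hswap.prod_fiberwise fun c => (hcol c).hasSum⟩

theorem continuous_Q (n p : ℕ) : Continuous (Q n p) := by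
  induction n generalizing p with
  | zero => exact continuous_const
  | succ n ih =>
    change Continuous fun x => Q (n + 1) p x
    simp only [Q]
    split_ifs
    · exact continuous_const
    · exact ((continuous_const.sub continuous_id).mul (ih _)).add
        (continuous_primitive (fun a b => (ih p).intervalIntegrable a b) 0)

theorem Q_nonneg (n p : ℕ) {x : ℝ} (hx : x ∈ Icc (0:ℝ) 1) : 0 ≤ Q n p x := by
  induction n generalizing p x with
  | zero => unfold Q; split_ifs <;> norm_num
  | succ n ih =>
    unfold Q
    split_ifs
    · exact le_rfl
    · exact add_nonneg (mul_nonneg (by linarith [hx.2]) (ih _ hx))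
        (integral_nonneg hx.1 fun v hv => ih p ⟨hv.1, hv.2.trans hx.2⟩)

theorem Q_zero_players (n : ℕ) (x : ℝ) : Q n 0 x = 0 := by
  cases n <;> simp [Q]

theorem Q_succ_one_player (n : ℕ) (x : ℝ) : Q (n + 1) 1 x = 0 := by
  simp [Q]

theorem Q_eq_zero_of_add_two_le {n p : ℕ} (h : n + 2 ≤ p) (x : ℝ) : Q n p x = 0 := by
  induction n generalizing p x with
  | zero => simp only [Q]; rw [if_neg (by omega)]
  | succ n ih =>
    simp [Q, ih (show n + 2 ≤ p - 1 by omega), ih (show n + 2 ≤ p by omega)]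

theorem Q_succ_add_two (n p : ℕ) (x : ℝ) :
    Q (n + 1) (p + 2) x = (1 - x) * Q n (p + 1) x + ∫ v in (0:ℝ)..x, Q n (p + 2) v := by
  simp [Q]

noncomputable def throwOp (u : ℝ) : Module.End ℝ C(ℝ, ℝ) where
  toFun f := ⟨fun x => (1 - x) * u * f x + ∫ v in (0:ℝ)..x, f v,
    ((continuous_const.sub continuous_id).mul continuous_const).mul f.continuous |>.add
      (continuous_primitive (fun a b => f.continuous.intervalIntegrable a b) 0)⟩
  map_add' f g := by
    ext x
    simp only [ContinuousMap.add_apply, ContinuousMap.coe_mk,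
      integral_add (f.continuous.intervalIntegrable 0 x) (g.continuous.intervalIntegrable 0 x)]
    ring
  map_smul' c f := by
    ext x
    simp only [ContinuousMap.coe_smul, Pi.smul_apply, smul_eq_mul, ContinuousMap.coe_mk,
      intervalIntegral.integral_const_mul, Real.ringHom_apply]
    ring

theorem throwOp_apply (u : ℝ) (f : C(ℝ, ℝ)) (x : ℝ) :
    throwOp u f x = (1 - x) * u * f x + ∫ v in (0:ℝ)..x, f v :=
  rfl

theorem abs_throwOp_apply_le {u a C : ℝ} (hu : 0 ≤ u) (ha : 0 < a) {f : C(ℝ, ℝ)}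
    (hf : ∀ y ∈ Icc (0:ℝ) 1, |f y| ≤ C * Real.exp (a * y)) :
    ∀ y ∈ Icc (0:ℝ) 1, |throwOp u f y| ≤ C * (u + a⁻¹) * Real.exp (a * y) := by
  intro y hy
  have hC : 0 ≤ C := by simpa using (abs_nonneg _).trans (hf 0 ⟨le_rfl, zero_le_one⟩)
  have hint : |∫ v in (0:ℝ)..y, f v| ≤ C * a⁻¹ * (Real.exp (a * y) - 1) :=
    calc |∫ v in (0:ℝ)..y, f v|
        ≤ ∫ v in (0:ℝ)..y, C * Real.exp (a * v) := by
          rw [← Real.norm_eq_abs]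
          exact intervalIntegral.norm_integral_le_of_norm_le hy.1
              (ae_of_all _ fun v hv => hf v ⟨hv.1.le, hv.2.trans hy.2⟩)
              ((by fun_prop : Continuous fun v => C * Real.exp (a * v)).intervalIntegrable 0 y)
      _ = C * a⁻¹ * (Real.exp (a * y) - 1) := by
          rw [intervalIntegral.integral_const_mul, integral_comp_mul_left Real.exp ha.ne',
            integral_exp, mul_zero, Real.exp_zero, smul_eq_mul, mul_assoc]
  calc |throwOp u f y|
      ≤ (1 - y) * u * |f y| + |∫ v in (0:ℝ)..y, f v| := by
        rw [throwOp_apply, ← abs_of_nonneg (by nlinarith [hy.2] : 0 ≤ (1 - y) * u)]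
        exact (abs_add_le _ _).trans_eq (by rw [abs_mul, abs_abs])
    _ ≤ 1 * u * (C * Real.exp (a * y)) + C * a⁻¹ * (Real.exp (a * y) - 1) := by
        gcongr
        · linarith [hy.1]
        · exact hf y hy
    _ ≤ C * (u + a⁻¹) * Real.exp (a * y) := by
        nlinarith [mul_nonneg hC (inv_nonneg.mpr ha.le)]

theorem abs_throwOp_pow_apply_le {u a C : ℝ} (hu : 0 ≤ u) (ha : 0 < a) {f : C(ℝ, ℝ)}
    (hf : ∀ y ∈ Icc (0:ℝ) 1, |f y| ≤ C * Real.exp (a * y)) (n : ℕ) :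
    ∀ y ∈ Icc (0:ℝ) 1, |(throwOp u ^ n) f y| ≤ C * (u + a⁻¹) ^ n * Real.exp (a * y) := by
  induction n with
  | zero => simpa using hf
  | succ n ih =>
    intro y hy
    rw [pow_succ', Module.End.mul_apply]
    exact (abs_throwOp_apply_le hu ha ih y hy).trans_eq (by ring)

theorem tendsto_pow_mul_throwOp_pow_apply {u : ℝ} (hu₀ : 0 ≤ u) (hu₁ : u < 1) (f : C(ℝ, ℝ))
    (k : ℕ) {x : ℝ} (hx : x ∈ Icc (0:ℝ) 1) :
    Tendsto (fun n : ℕ => (n : ℝ) ^ k * (throwOp u ^ n) f x) atTop (𝓝 0) := by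
  obtain ⟨C, hC⟩ := isCompact_Icc.exists_bound_of_continuousOn f.continuous.continuousOn
  have ha : 0 < 2 / (1 - u) := by
    have : 0 < 1 - u := by linarith
    positivity
  have hf : ∀ y ∈ Icc (0:ℝ) 1, |f y| ≤ C * Real.exp (2 / (1 - u) * y) := fun y hy =>
    (hC y hy).trans <| le_mul_of_one_le_right ((norm_nonneg _).trans (hC y hy))
      (Real.one_le_exp (mul_nonneg ha.le hy.1))
  have hr : |u + (2 / (1 - u))⁻¹| < 1 := by
    rw [inv_div, abs_lt]
    constructor <;> linarith
  have hlim := (tendsto_pow_const_mul_const_pow_of_abs_lt_one k hr).const_mul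
    (C * Real.exp (2 / (1 - u) * x))
  rw [mul_zero] at hlim
  refine squeeze_zero_norm (fun n => ?_) hlim
  rw [Real.norm_eq_abs, abs_mul, abs_of_nonneg (by positivity)]
  calc (n : ℝ) ^ k * |(throwOp u ^ n) f x|
      ≤ (n : ℝ) ^ k * (C * (u + (2 / (1 - u))⁻¹) ^ n * Real.exp (2 / (1 - u) * x)) := by
        gcongr
        exact abs_throwOp_pow_apply_le hu₀ ha hf n x hx
    _ = _ := by ring

noncomputable def genFun (u : ℝ) (n : ℕ) : C(ℝ, ℝ) where
  toFun x := ∑ p ∈ range (n + 2), Q n p x * u ^ p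
  continuous_toFun := continuous_finsetSum _ fun p _ => (continuous_Q n p).mul continuous_const

theorem genFun_apply (u : ℝ) (n : ℕ) (x : ℝ) :
    genFun u n x = ∑ p ∈ range (n + 2), Q n p x * u ^ p :=
  rfl

theorem hasSum_genFun (u : ℝ) (n : ℕ) (x : ℝ) :
    HasSum (fun p => Q n p x * u ^ p) (genFun u n x) := by
  rw [genFun_apply]
  exact hasSum_sum_of_ne_finset_zero fun p hp => by
    rw [Q_eq_zero_of_add_two_le (by simpa using hp), zero_mul]

theorem genFun_apply_eq_sum_range (u : ℝ) {n N : ℕ} (h : n + 2 ≤ N) (x : ℝ) :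
    genFun u n x = ∑ p ∈ range N, Q n p x * u ^ p :=
  (hasSum_genFun u n x).unique <| hasSum_sum_of_ne_finset_zero fun p hp => by
    rw [Q_eq_zero_of_add_two_le (by simp only [Finset.mem_range, not_lt] at hp; omega), zero_mul]

theorem genFun_nonneg {u : ℝ} (hu : 0 ≤ u) (n : ℕ) {x : ℝ} (hx : x ∈ Icc (0:ℝ) 1) :
    0 ≤ genFun u n x :=
  (genFun_apply u n x).symm ▸ sum_nonneg fun p _ => mul_nonneg (Q_nonneg n p hx) (pow_nonneg hu p)

theorem genFun_one_apply (u x : ℝ) : genFun u 1 x = (1 - x) * u ^ 2 := by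
  simp [genFun_apply, sum_range_succ, Q]

theorem genFun_succ_succ (u : ℝ) (n : ℕ) :
    genFun u (n + 2) = throwOp u (genFun u (n + 1)) := by
  ext x
  have hx : genFun u (n + 1) x = ∑ q ∈ range (n + 2), Q (n + 1) (q + 1) x * u ^ (q + 1) := by
    rw [genFun_apply_eq_sum_range u (N := n + 2 + 1) (by omega), sum_range_succ', Q_zero_players]
    simp
  have hv : ∀ v, genFun u (n + 1) v = ∑ q ∈ range (n + 2), Q (n + 1) (q + 2) v * u ^ (q + 2) := by
    intro v
    rw [genFun_apply_eq_sum_range u (N := n + 2 + 2) (by omega), sum_range_succ',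
      sum_range_succ', Q_succ_one_player, Q_zero_players]
    simp
  rw [genFun_apply, sum_range_succ', sum_range_succ', Q_succ_one_player, Q_zero_players,
    throwOp_apply, hx, integral_congr fun v _ => hv v,
    integral_finsetSum fun p _ => ((continuous_Q _ _).intervalIntegrable 0 x).mul_const _,
    mul_sum, ← sum_add_distrib]
  simp only [Q_succ_add_two, intervalIntegral.integral_mul_const, zero_add, pow_one, zero_mul,
    add_zero, pow_zero, mul_one]
  exact sum_congr rfl fun q _ => by ring

theorem genFun_succ_eq_pow (u : ℝ) (n : ℕ) :
    genFun u (n + 1) = (throwOp u ^ n) (genFun u 1) := by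
  induction n with
  | zero => rfl
  | succ n ih => rw [genFun_succ_succ, ih, pow_succ', Module.End.mul_apply]

theorem throwOp_const (u : ℝ) (hu : u ≠ 1) :
    throwOp u (.const ℝ (u ^ 2 / (1 - u))) = .const ℝ (u ^ 2 / (1 - u)) - genFun u 1 := by
  have : 1 - u ≠ 0 := sub_ne_zero.mpr hu.symm
  ext x
  simp only [throwOp_apply, ContinuousMap.const_apply, intervalIntegral.integral_const,
    smul_eq_mul, ContinuousMap.sub_apply, genFun_one_apply]
  field_simp
  ring

/-- For `x < -(1 - u) / u` the base is negative and `rpow` takes junk values, but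
`throwOp_expectedGenFun` still holds on all of `ℝ`: the antiderivative has exponent `1 / u ≥ 1`. -/
noncomputable def expectedGenFun (u : ℝ) (hu : u ∈ Ioo (0:ℝ) 1) : C(ℝ, ℝ) where
  toFun x := u ^ 2 / (1 - u) ^ 2 * ((1 - u + u * x) / (1 - u)) ^ (1 / u - 1)
  continuous_toFun := by
    have : 0 ≤ 1 / u - 1 := by rw [sub_nonneg, le_div_iff₀ hu.1]; linarith [hu.2]
    exact continuous_const.mul ((Real.continuous_rpow_const this).comp (by fun_prop))

theorem expectedGenFun_apply (u : ℝ) (hu : u ∈ Ioo (0:ℝ) 1) (x : ℝ) :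
    expectedGenFun u hu x = u ^ 2 / (1 - u) ^ 2 * ((1 - u + u * x) / (1 - u)) ^ (1 / u - 1) :=
  rfl

theorem integral_expectedGenFun (u : ℝ) (hu : u ∈ Ioo (0:ℝ) 1) (x : ℝ) :
    ∫ v in (0:ℝ)..x, expectedGenFun u hu v =
      u ^ 2 / (1 - u) * (((1 - u + u * x) / (1 - u)) ^ (1 / u) - 1) := by
  have h1u : 1 - u ≠ 0 := by linarith [hu.2]
  have hp : 1 ≤ 1 / u := by rw [le_div_iff₀ hu.1]; linarith [hu.2]
  have hderiv : ∀ v, HasDerivAt (fun w => u ^ 2 / (1 - u) * ((1 - u + u * w) / (1 - u)) ^ (1 / u))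
      (expectedGenFun u hu v) v := by
    intro v
    have hbase : HasDerivAt (fun w => (1 - u + u * w) / (1 - u)) (u / (1 - u)) v := by
      simpa using (((hasDerivAt_id v).const_mul u).const_add (1 - u)).div_const (1 - u)
    refine ((hbase.rpow_const (Or.inr hp)).const_mul (u ^ 2 / (1 - u))).congr_deriv ?_
    rw [expectedGenFun_apply]
    field_simp
  rw [integral_eq_sub_of_hasDerivAt (fun v _ => hderiv v)
    ((expectedGenFun u hu).continuous.intervalIntegrable 0 x)]
  simp [div_self h1u]
  ring

theorem throwOp_expectedGenFun (u : ℝ) (hu : u ∈ Ioo (0:ℝ) 1) :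
    throwOp u (expectedGenFun u hu) = expectedGenFun u hu - .const ℝ (u ^ 2 / (1 - u)) := by
  have h1u : 1 - u ≠ 0 := by linarith [hu.2]
  ext x
  set B := (1 - u + u * x) / (1 - u) with hB
  have hpow : B ^ (1 / u) = B ^ (1 / u - 1) * B := by
    rcases eq_or_ne B 0 with h | h
    · rw [h, mul_zero, Real.zero_rpow (one_div_ne_zero hu.1.ne')]
    · rw [← Real.rpow_add_one h, sub_add_cancel]
  have hB' : (1 - u) * B = 1 - u + u * x := by rw [hB]; field_simp
  rw [throwOp_apply, integral_expectedGenFun, ← hB, hpow, ContinuousMap.sub_apply,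
    ContinuousMap.const_apply, expectedGenFun_apply, ← hB]
  have hc : u ^ 2 / (1 - u) = u ^ 2 / (1 - u) ^ 2 * (1 - u) := by field_simp
  set a := u ^ 2 / (1 - u) ^ 2
  set S := B ^ (1 / u - 1)
  linear_combination (a * S) * hB' + (S * B) * hc

theorem expectedGenFun_apply_of_nonneg (u : ℝ) (hu : u ∈ Ioo (0:ℝ) 1) {x : ℝ} (hx : 0 ≤ x) :
    expectedGenFun u hu x =
      u ^ 2 / (1 - u) ^ 2 * ((1 - u) / (1 - (1 - x) * u)) ^ (1 - 1 / u : ℝ) := by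
  have hbase : 0 ≤ (1 - u) / (1 - (1 - x) * u) :=
    div_nonneg (by linarith [hu.2]) (by nlinarith [hu.1, hu.2])
  rw [expectedGenFun_apply, show 1 - 1 / u = -(1 / u - 1) by ring, Real.rpow_neg hbase,
    ← Real.inv_rpow hbase, inv_div, show 1 - (1 - x) * u = 1 - u + u * x by ring]

theorem hasSum_mul_genFun {u : ℝ} (hu : u ∈ Ioo (0:ℝ) 1) {x : ℝ} (hx : x ∈ Icc (0:ℝ) 1) :
    HasSum (fun n : ℕ => n * genFun u n x) (expectedGenFun u hu x) := by
  rw [← hasSum_nat_add_iff' 1]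
  simp only [sum_range_one, Nat.cast_zero, zero_mul, sub_zero, Nat.cast_add, Nat.cast_one]
  rw [hasSum_iff_tendsto_nat_of_nonneg fun n => by positivity [genFun_nonneg hu.1.le (n + 1) hx]]
  have hpartial : ∀ M, ∑ n ∈ range M, ((n : ℝ) + 1) * genFun u (n + 1) x =
      expectedGenFun u hu x - (throwOp u ^ M) (expectedGenFun u hu) x -
        M * (throwOp u ^ M) (.const ℝ (u ^ 2 / (1 - u))) x := by
    intro M
    have := congrArg (· x) <| (throwOp u).sum_range_succ_nsmul_pow_apply
      (throwOp_const u hu.2.ne) (throwOp_expectedGenFun u hu) M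
    simpa [← genFun_succ_eq_pow, nsmul_eq_mul] using this
  simp_rw [hpartial]
  have h₀ := tendsto_pow_mul_throwOp_pow_apply hu.1.le hu.2 (expectedGenFun u hu) 0 hx
  have h₁ := tendsto_pow_mul_throwOp_pow_apply hu.1.le hu.2 (.const ℝ (u ^ 2 / (1 - u))) 1 hx
  simp only [pow_zero, one_mul, pow_one] at h₀ h₁
  simpa using (tendsto_const_nhds.sub h₀).sub h₁

/-- For `x ∈ [0,1]` and `u ∈ (0,1)`, with `E_p(x) := ∑_{n≥0} n·Q_{n,p}(x)` the expected
number of remaining throws, the series `∑_{p≥1} E_p(x) u^p` converges and equals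
`(u²/(1−u)²)·((1−u)/(1−(1−x)u))^{1−1/u}`, where the power is the real power of the
positive base `(1−u)/(1−(1−x)u)`. -/
theorem expectedRemaining_genFun (x u : ℝ) (hx : x ∈ Set.Icc (0:ℝ) 1)
    (hu : u ∈ Set.Ioo (0:ℝ) 1) :
    (∀ p : ℕ, 1 ≤ p → Summable fun n : ℕ => (n : ℝ) * Q n p x) ∧
    HasSum (fun p : ℕ => (∑' n : ℕ, (n : ℝ) * Q n (p + 1) x) * u ^ (p + 1))
      (u ^ 2 / (1 - u) ^ 2 * ((1 - u) / (1 - (1 - x) * u)) ^ (1 - 1 / u : ℝ)) := by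
  obtain ⟨hcol, hsum⟩ := hasSum_tsum_swap_of_nonneg
    (f := fun (n p : ℕ) => (n : ℝ) * Q n p x * u ^ p)
    (fun n p => by positivity [Q_nonneg n p hx, hu.1.le])
    (fun n => by simpa only [mul_assoc] using (hasSum_genFun u n x).mul_left (n : ℝ))
    (hasSum_mul_genFun hu hx)
  refine ⟨fun p _ => (summable_mul_right_iff (pow_ne_zero p hu.1.ne')).1 (hcol p), ?_⟩
  rw [← hasSum_nat_add_iff' 1, sum_range_one] at hsum
  simpa [Q_zero_players, tsum_mul_right, expectedGenFun_apply_of_nonneg u hu hx.1] using hsum
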